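/- Define g(λ) := λ + 2β − f'(0) and G(λ) := (2αβ/Δ(λ))·[α + √(dλ)/tanh(√(λ/d)) + √(dλ)/sinh(√(λ/d))] for λ > 0, with G(0) := 2β. Then G is strictly decreasing on (0,∞) with G(λ) → 0 as λ → +∞, g is strictly increasing with g(0) = 2β − f'(0) < 2β = G(0), and there exists a unique λ₀ > 0 such that g(λ₀) = G(λ₀); moreover g(λ) < G(λ) for all λ ∈ [0, λ₀) and g(λ) > G(λ) for all λ > λ₀. Equivalently, y(λ₀) = 1, y(λ) < 1 for λ ∈ (0, λ₀), and y(λ) > 1 for λ > λ₀. -/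

import Mathlib

open Set Filter

noncomputable section

/-- `Δ(λ) = α² + dλ + 2α√(dλ)/tanh(√(λ/d))`. -/
def Δfun (α d lam : ℝ) : ℝ :=
  α ^ 2 + d * lam + 2 * α * Real.sqrt (d * lam) / Real.tanh (Real.sqrt (lam / d))

/-- `y(λ) = [Δ(λ)/(2αβ)·(λ + 2β − f'(0)) − (α + √(dλ)/tanh(√(λ/d)))]·sinh(√(λ/d))/√(dλ)`,
where `r` stands for `f'(0)`. -/
def yfun (α β d r lam : ℝ) : ℝ :=
  (Δfun α d lam / (2 * α * β) * (lam + 2 * β - r)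
      - (α + Real.sqrt (d * lam) / Real.tanh (Real.sqrt (lam / d))))
    * (Real.sinh (Real.sqrt (lam / d)) / Real.sqrt (d * lam))

open scoped Classical

/-- `g(λ) = λ + 2β − f'(0)`, where `r` stands for `f'(0)`. -/
def gfun (β r lam : ℝ) : ℝ := lam + 2 * β - r

/-- `G(λ) = (2αβ/Δ(λ))·[α + √(dλ)/tanh(√(λ/d)) + √(dλ)/sinh(√(λ/d))]` for `λ > 0`,
with `G(0) = 2β`. -/
def Gfun (α β d lam : ℝ) : ℝ :=
  if lam = 0 then 2 * β
  else 2 * α * β / Δfun α d lam *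
    (α + Real.sqrt (d * lam) / Real.tanh (Real.sqrt (lam / d))
       + Real.sqrt (d * lam) / Real.sinh (Real.sqrt (lam / d)))

/-! With `s = √(λ/d)`, the half-angle identities factor `Δ(λ)` as
`(α + d·s·tanh(s/2)) · (α + √(dλ)/tanh s + √(dλ)/sinh s)`, so `G(λ) = 2αβ/(α + d·s·tanh(s/2))`
for every `λ ≥ 0`. The denominator is continuous, strictly increasing from `α` to `+∞`, hence `G`
decreases strictly from `2β` to `0`, and `g - G` is continuous and strictly increasing with
`(g - G)(0) = -f'(0) < 0 < (g - G)(f'(0))`: the intermediate value theorem gives `λ₀`.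
Finally `y(λ) - 1` is `g(λ) - G(λ)` times a positive factor. -/

namespace Real

theorem strictMono_tanh : StrictMono tanh := fun a b hab => by
  by_contra! h
  have := artanh_le_artanh (neg_one_lt_tanh b) (tanh_lt_one a) h
  rw [artanh_tanh, artanh_tanh] at this
  exact this.not_gt hab

theorem tanh_pos {x : ℝ} (hx : 0 < x) : 0 < tanh x :=
  tanh_zero ▸ strictMono_tanh hx

theorem tanh_nonneg {x : ℝ} (hx : 0 ≤ x) : 0 ≤ tanh x :=
  tanh_zero ▸ strictMono_tanh.monotone hx

theorem continuous_tanh : Continuous tanh := by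
  rw [show tanh = fun x => sinh x / cosh x from funext tanh_eq_sinh_div_cosh]
  exact continuous_sinh.div continuous_cosh fun x => (cosh_pos x).ne'

theorem strictMonoOn_mul_tanh_half : StrictMonoOn (fun s => s * tanh (s / 2)) (Ici 0) :=
  fun _ ha _ _ hab =>
    mul_lt_mul'' hab (strictMono_tanh (div_lt_div_of_pos_right hab two_pos)) ha
      (tanh_nonneg (div_nonneg ha zero_le_two))

theorem tendsto_mul_tanh_half_atTop : Tendsto (fun s => s * tanh (s / 2)) atTop atTop := by
  refine tendsto_atTop_mono' atTop ?_ (tendsto_id.const_mul_atTop (tanh_pos one_half_pos))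
  filter_upwards [eventually_ge_atTop 1] with s hs
  rw [mul_comm]
  exact mul_le_mul_of_nonneg_left (strictMono_tanh.monotone (by linarith)) (zero_le_one.trans hs)

theorem sqrt_mul_eq_mul_sqrt_div {d : ℝ} (hd : 0 < d) (x : ℝ) : √(d * x) = d * √(x / d) := by
  rw [show d * x = d ^ 2 * (x / d) by field_simp, sqrt_mul (sq_nonneg d), sqrt_sq hd.le]

end Real

def Hfun (α d lam : ℝ) : ℝ :=
  α + d * (Real.sqrt (lam / d) * Real.tanh (Real.sqrt (lam / d) / 2))

def Sfun (α d lam : ℝ) : ℝ :=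
  α + Real.sqrt (d * lam) / Real.tanh (Real.sqrt (lam / d))
    + Real.sqrt (d * lam) / Real.sinh (Real.sqrt (lam / d))

section

variable {α β d lam : ℝ}

theorem Gfun_zero : Gfun α β d 0 = 2 * β :=
  if_pos rfl

theorem Hfun_zero : Hfun α d 0 = α := by
  simp [Hfun]

theorem Hfun_pos (hα : 0 < α) (hd : 0 < d) : 0 < Hfun α d lam := by
  have : 0 ≤ Real.tanh (Real.sqrt (lam / d) / 2) := Real.tanh_nonneg (by positivity)
  unfold Hfun
  positivity

theorem strictMonoOn_Hfun (hd : 0 < d) : StrictMonoOn (Hfun α d) (Ici 0) := by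
  have hsqrt : StrictMonoOn (fun lam => Real.sqrt (lam / d)) (Ici 0) := fun a ha b _ hab =>
    Real.sqrt_lt_sqrt (div_nonneg ha hd.le) (div_lt_div_of_pos_right hab hd)
  intro a ha b hb hab
  have := Real.strictMonoOn_mul_tanh_half.comp hsqrt (fun _ _ => Real.sqrt_nonneg _) ha hb hab
  simp only [Hfun, Function.comp_apply] at this ⊢
  linarith [mul_lt_mul_of_pos_left this hd]

theorem continuous_Hfun : Continuous (Hfun α d) := by
  have := Real.continuous_tanh
  unfold Hfun
  fun_prop

theorem tendsto_Hfun_atTop (hd : 0 < d) : Tendsto (Hfun α d) atTop atTop :=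
  tendsto_atTop_add_const_left _ _ <| Tendsto.const_mul_atTop hd <|
    Real.tendsto_mul_tanh_half_atTop.comp <|
      Real.tendsto_sqrt_atTop.comp (tendsto_id.atTop_div_const hd)

theorem Sfun_pos (hα : 0 < α) (hd : 0 < d) (hlam : 0 < lam) : 0 < Sfun α d lam := by
  have hs : 0 < Real.sqrt (lam / d) := Real.sqrt_pos.mpr (by positivity)
  have := Real.tanh_pos hs
  have := Real.sinh_pos_iff.mpr hs
  have : 0 < Real.sqrt (d * lam) := Real.sqrt_pos.mpr (by positivity)
  unfold Sfun
  positivity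

theorem Δfun_eq_Hfun_mul_Sfun (hd : 0 < d) (hlam : 0 < lam) :
    Δfun α d lam = Hfun α d lam * Sfun α d lam := by
  have hs : 0 < Real.sqrt (lam / d) := Real.sqrt_pos.mpr (by positivity)
  have hdlam : d * lam = d ^ 2 * Real.sqrt (lam / d) ^ 2 := by
    rw [Real.sq_sqrt (by positivity)]; field_simp
  unfold Δfun Hfun Sfun
  rw [Real.sqrt_mul_eq_mul_sqrt_div hd, hdlam]
  set s := Real.sqrt (lam / d)
  have hsinh : Real.sinh s = 2 * Real.sinh (s / 2) * Real.cosh (s / 2) := by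
    rw [← Real.sinh_two_mul, mul_div_cancel₀ s two_ne_zero]
  have hcosh : Real.cosh s = Real.cosh (s / 2) ^ 2 + Real.sinh (s / 2) ^ 2 := by
    rw [← Real.cosh_two_mul, mul_div_cancel₀ s two_ne_zero]
  have hpyth : Real.cosh (s / 2) ^ 2 = Real.sinh (s / 2) ^ 2 + 1 := Real.cosh_sq _
  have := Real.sinh_pos_iff.mpr (half_pos hs)
  have := Real.cosh_pos (s / 2)
  simp only [Real.tanh_eq_sinh_div_cosh, hsinh, hcosh]
  field_simp
  linear_combination (α * d * s * Real.cosh (s / 2) + d ^ 2 * s ^ 2 * Real.sinh (s / 2)) * hpyth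

theorem Gfun_eq_div_Hfun (hα : 0 < α) (hd : 0 < d) (hlam : 0 ≤ lam) :
    Gfun α β d lam = 2 * α * β / Hfun α d lam := by
  rcases hlam.eq_or_lt with rfl | hlam
  · rw [Gfun_zero, Hfun_zero]
    field_simp
  · rw [Gfun, if_neg hlam.ne']
    change 2 * α * β / Δfun α d lam * Sfun α d lam = _
    have := Sfun_pos hα hd hlam
    rw [Δfun_eq_Hfun_mul_Sfun hd hlam]
    field_simp

theorem strictAntiOn_Gfun (hα : 0 < α) (hβ : 0 < β) (hd : 0 < d) :
    StrictAntiOn (Gfun α β d) (Ici 0) := fun a ha b hb hab => by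
  rw [Gfun_eq_div_Hfun hα hd ha, Gfun_eq_div_Hfun hα hd hb]
  exact div_lt_div_of_pos_left (by positivity) (Hfun_pos hα hd) (strictMonoOn_Hfun hd ha hb hab)

theorem continuousOn_Gfun (hα : 0 < α) (hd : 0 < d) : ContinuousOn (Gfun α β d) (Ici 0) :=
  (continuous_const.div continuous_Hfun fun _ => (Hfun_pos hα hd).ne').continuousOn.congr
    fun _ hlam => Gfun_eq_div_Hfun hα hd hlam

theorem tendsto_Gfun_atTop (hα : 0 < α) (hd : 0 < d) :
    Tendsto (Gfun α β d) atTop (nhds 0) :=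
  (tendsto_const_nhds.div_atTop (tendsto_Hfun_atTop hd)).congr' <|
    (eventually_ge_atTop 0).mono fun _ hlam => (Gfun_eq_div_Hfun hα hd hlam).symm

theorem exists_pos_yfun_sub_one_eq_mul (r : ℝ) (hα : 0 < α) (hβ : 0 < β) (hd : 0 < d)
    (hlam : 0 < lam) :
    ∃ K > 0, yfun α β d r lam - 1 = K * (gfun β r lam - Gfun α β d lam) := by
  have hs : 0 < Real.sqrt (lam / d) := Real.sqrt_pos.mpr (by positivity)
  have := Real.sinh_pos_iff.mpr hs
  have : 0 < Real.sqrt (d * lam) := Real.sqrt_pos.mpr (by positivity)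
  have : 0 < Δfun α d lam := by
    rw [Δfun_eq_Hfun_mul_Sfun hd hlam]; exact mul_pos (Hfun_pos hα hd) (Sfun_pos hα hd hlam)
  refine ⟨Δfun α d lam * Real.sinh (Real.sqrt (lam / d)) / (2 * α * β * Real.sqrt (d * lam)),
    by positivity, ?_⟩
  rw [Gfun, if_neg hlam.ne']
  unfold yfun gfun
  field_simp
  ring

theorem strictMonoOn_gfun_sub_Gfun (r : ℝ) (hα : 0 < α) (hβ : 0 < β) (hd : 0 < d) :
    StrictMonoOn (fun lam => gfun β r lam - Gfun α β d lam) (Ici 0) := fun a ha b hb hab =>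
  sub_lt_sub (by simp only [gfun]; linarith) (strictAntiOn_Gfun hα hβ hd ha hb hab)

theorem exists_gfun_eq_Gfun {r : ℝ} (hα : 0 < α) (hβ : 0 < β) (hd : 0 < d) (hr : 0 < r) :
    ∃ lam0 > 0, gfun β r lam0 = Gfun α β d lam0 := by
  have hGr : Gfun α β d r < Gfun α β d 0 := strictAntiOn_Gfun hα hβ hd self_mem_Ici hr.le hr
  rw [Gfun_zero] at hGr
  have hcont : ContinuousOn (fun lam => gfun β r lam - Gfun α β d lam) (Icc 0 r) :=
    ((by unfold gfun; fun_prop : Continuous (gfun β r)).continuousOn.sub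
      (continuousOn_Gfun hα hd)).mono Icc_subset_Ici_self
  obtain ⟨lam0, ⟨hlam0, -⟩, hzero⟩ : ∃ lam0 ∈ Ioo 0 r, gfun β r lam0 - Gfun α β d lam0 = 0 :=
    intermediate_value_Ioo hr.le hcont
      ⟨by simp only [gfun, Gfun_zero]; linarith, by simp only [gfun]; linarith⟩
  exact ⟨lam0, hlam0, sub_eq_zero.mp hzero⟩

end

theorem lambda_zero_exists_unique_general
    (α β d : ℝ) (hα : 0 < α) (hβ : 0 < β) (hd : 0 < d)
    (f : ℝ → ℝ)
    (hr : 0 < deriv f 0) :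
    StrictAntiOn (Gfun α β d) (Ioi 0) ∧
    Tendsto (Gfun α β d) atTop (nhds 0) ∧
    StrictMono (gfun β (deriv f 0)) ∧
    gfun β (deriv f 0) 0 = 2 * β - deriv f 0 ∧
    gfun β (deriv f 0) 0 < Gfun α β d 0 ∧
    Gfun α β d 0 = 2 * β ∧
    ∃ lam0 : ℝ, 0 < lam0 ∧
      gfun β (deriv f 0) lam0 = Gfun α β d lam0 ∧
      (∀ lam : ℝ, 0 < lam → gfun β (deriv f 0) lam = Gfun α β d lam → lam = lam0) ∧
      (∀ lam ∈ Ico (0:ℝ) lam0, gfun β (deriv f 0) lam < Gfun α β d lam) ∧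
      (∀ lam : ℝ, lam0 < lam → Gfun α β d lam < gfun β (deriv f 0) lam) ∧
      yfun α β d (deriv f 0) lam0 = 1 ∧
      (∀ lam ∈ Ioo (0:ℝ) lam0, yfun α β d (deriv f 0) lam < 1) ∧
      (∀ lam : ℝ, lam0 < lam → 1 < yfun α β d (deriv f 0) lam) := by
  set r := deriv f 0
  have hg0 : gfun β r 0 = 2 * β - r := by rw [gfun, zero_add]
  have hF := strictMonoOn_gfun_sub_Gfun r hα hβ hd
  obtain ⟨lam0, hlam0, heq⟩ := exists_gfun_eq_Gfun hα hβ hd hr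
  have hF0 : gfun β r lam0 - Gfun α β d lam0 = 0 := sub_eq_zero.mpr heq
  have hlt : ∀ lam ∈ Ico 0 lam0, gfun β r lam - Gfun α β d lam < 0 := fun lam ⟨h0, h⟩ =>
    hF0 ▸ hF h0 hlam0.le h
  have hgt : ∀ lam, lam0 < lam → 0 < gfun β r lam - Gfun α β d lam := fun lam h =>
    hF0 ▸ hF hlam0.le (hlam0.trans h).le h
  refine ⟨(strictAntiOn_Gfun hα hβ hd).mono Ioi_subset_Ici_self, tendsto_Gfun_atTop hα hd,
    fun a b hab => by simp only [gfun]; linarith, hg0, by rw [Gfun_zero]; linarith, Gfun_zero,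
    lam0, hlam0, heq,
    fun lam h heq' => hF.injOn h.le hlam0.le (by simp only [heq', heq, sub_self]),
    fun lam h => sub_neg.mp (hlt lam h), fun lam h => sub_pos.mp (hgt lam h), ?_, ?_, ?_⟩
  · obtain ⟨K, -, hy⟩ := exists_pos_yfun_sub_one_eq_mul r hα hβ hd hlam0
    rw [hF0, mul_zero, sub_eq_zero] at hy
    exact hy
  · intro lam ⟨h0, h⟩
    obtain ⟨K, hK, hy⟩ := exists_pos_yfun_sub_one_eq_mul r hα hβ hd h0
    linarith [mul_neg_of_pos_of_neg hK (hlt lam ⟨h0.le, h⟩)]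
  · intro lam h
    obtain ⟨K, hK, hy⟩ := exists_pos_yfun_sub_one_eq_mul r hα hβ hd (hlam0.trans h)
    linarith [mul_pos hK (hgt lam h)]

/-- **Existence and uniqueness of `λ₀`**: `G` is strictly decreasing on `(0,∞)` and tends to
`0` at `+∞`, `g` is strictly increasing with `g(0) = 2β − f'(0) < 2β = G(0)`, and there is a
unique `λ₀ > 0` with `g(λ₀) = G(λ₀)`; moreover `g < G` on `[0,λ₀)` and `g > G` on `(λ₀,∞)`,
equivalently `y(λ₀) = 1`, `y < 1` on `(0,λ₀)` and `y > 1` on `(λ₀,∞)`. -/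
theorem lambda_zero_exists_unique
    (α β d : ℝ) (hα : 0 < α) (hβ : 0 < β) (hd : 0 < d)
    (f : ℝ → ℝ) (hf : ContDiff ℝ 1 f) (hf0 : f 0 = 0) (hf1 : f 1 = 0)
    (hfpos : ∀ u ∈ Ioo (0:ℝ) 1, 0 < f u ∧ f u ≤ deriv f 0 * u)
    (hr : 0 < deriv f 0) :
    StrictAntiOn (Gfun α β d) (Ioi 0) ∧
    Tendsto (Gfun α β d) atTop (nhds 0) ∧
    StrictMono (gfun β (deriv f 0)) ∧
    gfun β (deriv f 0) 0 = 2 * β - deriv f 0 ∧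
    gfun β (deriv f 0) 0 < Gfun α β d 0 ∧
    Gfun α β d 0 = 2 * β ∧
    ∃ lam0 : ℝ, 0 < lam0 ∧
      gfun β (deriv f 0) lam0 = Gfun α β d lam0 ∧
      (∀ lam : ℝ, 0 < lam → gfun β (deriv f 0) lam = Gfun α β d lam → lam = lam0) ∧
      (∀ lam ∈ Ico (0:ℝ) lam0, gfun β (deriv f 0) lam < Gfun α β d lam) ∧
      (∀ lam : ℝ, lam0 < lam → Gfun α β d lam < gfun β (deriv f 0) lam) ∧
      yfun α β d (deriv f 0) lam0 = 1 ∧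
      (∀ lam ∈ Ioo (0:ℝ) lam0, yfun α β d (deriv f 0) lam < 1) ∧
      (∀ lam : ℝ, lam0 < lam → 1 < yfun α β d (deriv f 0) lam) :=
  lambda_zero_exists_unique_general α β d hα hβ hd f hr
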